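/- arXiv:0905.0747 — 6 statements merged into one kernel-verified Lean document; each statement's English description precedes it below -/
import Mathlib

section
/- Let P be a finite set of at least two points in the Euclidean plane and let c be a center of the smallest enclosing circle of P. Then there do not exist points p, p' ∈ P such that the vectors p − c and p' − c are linearly independent and every point of P lies in the closed convex cone with apex c spanned by p and p', i.e. in the set { c + α • (p − c) + β • (p' − c) : α ≥ 0, β ≥ 0 }. (Equivalently: for no two points p, p' of P is the concave sector determined at c by the half-lines [c, p) and [c, p') free of points of P.) -/
open Metric

noncomputable abbrev E := EuclideanSpace ℝ (Fin 2)

/-- A point `c` is a center of the smallest enclosing circle of `S`. -/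
def IsSECCenter (S : Set E) (c : E) : Prop :=
  ∀ x : E, (⨆ p ∈ S, dist c p) ≤ (⨆ p ∈ S, dist x p)

/-!
If `P` lay in the closed cone at `c` spanned by two independent directions `u = p - c` and
`v = p' - c`, then the bisector `d = ‖v‖ • u + ‖u‖ • v` would make an acute angle with `q - c`
for every `q ∈ P \ {c}`. Moving the center from `c` a little in direction `d` then strictly
decreases the distance to every farthest point of `P`, while the other points, being strictly
inside the circle, stay inside; so the enclosing radius strictly decreases, contradicting
minimality.
-/

open Filter Topology
open scoped RealInnerProductSpace

section InnerProductSpace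

variable {F : Type*} [NormedAddCommGroup F] [InnerProductSpace ℝ F]

lemma LinearIndependent.exists_inner_pos_pos {u v : F} (h : LinearIndependent ℝ ![u, v]) :
    ∃ d : F, 0 < ⟪u, d⟫ ∧ 0 < ⟪v, d⟫ := by
  have hu : 0 < ‖u‖ := norm_pos_iff.2 (by simpa using h.ne_zero 0)
  have hv : 0 < ‖v‖ := norm_pos_iff.2 (by simpa using h.ne_zero 1)
  have hcs : -⟪u, v⟫ < ‖u‖ * ‖v‖ := by
    have hne : ‖v‖ • -u ≠ ‖-u‖ • v := by
      rw [norm_neg, smul_neg, Ne, neg_eq_iff_add_eq_zero]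
      exact fun h0 => hv.ne' (LinearIndependent.pair_iff.1 h _ _ h0).1
    simpa [inner_neg_left] using inner_lt_norm_mul_iff_real.2 hne
  refine ⟨‖v‖ • u + ‖u‖ • v, ?_, ?_⟩
  · have : ⟪u, ‖v‖ • u + ‖u‖ • v⟫ = ‖u‖ * (‖u‖ * ‖v‖ + ⟪u, v⟫) := by
      rw [inner_add_right, real_inner_smul_right, real_inner_smul_right,
        real_inner_self_eq_norm_sq]
      ring
    rw [this]
    exact mul_pos hu (by linarith)
  · have : ⟪v, ‖v‖ • u + ‖u‖ • v⟫ = ‖v‖ * (‖u‖ * ‖v‖ + ⟪u, v⟫) := by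
      rw [inner_add_right, real_inner_smul_right, real_inner_smul_right,
        real_inner_self_eq_norm_sq, real_inner_comm]
      ring
    rw [this]
    exact mul_pos hv (by linarith)

lemma LinearIndependent.exists_inner_pos_of_mem_cone {u v : F}
    (h : LinearIndependent ℝ ![u, v]) :
    ∃ d : F, ∀ α β : ℝ, 0 ≤ α → 0 ≤ β → α • u + β • v ≠ 0 → 0 < ⟪α • u + β • v, d⟫ := by
  obtain ⟨d, hud, hvd⟩ := h.exists_inner_pos_pos
  refine ⟨d, fun α β hα hβ hne => ?_⟩
  rw [inner_add_left, real_inner_smul_left, real_inner_smul_left]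
  rcases hα.eq_or_lt with rfl | hα
  · rcases hβ.eq_or_lt with rfl | hβ
    · simp at hne
    · nlinarith
  · nlinarith

lemma eventually_norm_sub_smul_lt_norm {w d : F} (h : 0 < ⟪w, d⟫) :
    ∀ᶠ t in 𝓝[>] (0 : ℝ), ‖w - t • d‖ < ‖w‖ := by
  have hd : 0 < ‖d‖ ^ 2 := by
    have : d ≠ 0 := by rintro rfl; simp at h
    positivity
  filter_upwards [Ioo_mem_nhdsGT (show 0 < 2 * ⟪w, d⟫ / ‖d‖ ^ 2 by positivity)]
    with t ⟨ht0, ht⟩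
  have hsq : ‖w - t • d‖ ^ 2 = ‖w‖ ^ 2 - t * (2 * ⟪w, d⟫ - t * ‖d‖ ^ 2) := by
    rw [norm_sub_sq_real, real_inner_smul_right, norm_smul, Real.norm_of_nonneg ht0.le]
    ring
  have hgap : 0 < 2 * ⟪w, d⟫ - t * ‖d‖ ^ 2 := by
    rw [lt_div_iff₀ hd] at ht
    linarith
  refine lt_of_pow_lt_pow_left₀ 2 (norm_nonneg w) ?_
  rw [hsq]
  nlinarith [mul_pos ht0 hgap]

lemma exists_forall_dist_lt_of_inner_pos {P : Set F} (hP : P.Finite) {c d : F} {R : ℝ}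
    (hR : ∀ q ∈ P, dist c q ≤ R) (hd : ∀ q ∈ P, dist c q = R → 0 < ⟪q - c, d⟫) :
    ∃ x : F, ∀ q ∈ P, dist x q < R := by
  have hmove : ∀ q ∈ P, ∀ᶠ t in 𝓝[>] (0 : ℝ), dist (c + t • d) q < R := by
    intro q hq
    rcases (hR q hq).lt_or_eq with hlt | heq
    · have hcont : Continuous fun t : ℝ => dist (c + t • d) q := by fun_prop
      have := hcont.tendsto 0
      simp only [zero_smul, add_zero] at this
      exact nhdsWithin_le_nhds (this.eventually (gt_mem_nhds hlt))
    · filter_upwards [eventually_norm_sub_smul_lt_norm (hd q hq heq)] with t ht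
      rwa [← heq, dist_comm, dist_eq_norm, dist_comm, dist_eq_norm, sub_add_eq_sub_sub]
  obtain ⟨t, ht⟩ := (hP.eventually_all.2 hmove).exists
  exact ⟨c + t • d, ht⟩

end InnerProductSpace

theorem stmt2_general
    (P : Set E) (hPfin : P.Finite)
    (c : E) (hc : IsSECCenter P c) :
    ¬ ∃ p ∈ P, ∃ p' ∈ P,
        LinearIndependent ℝ ![p - c, p' - c] ∧
        P ⊆ {x : E | ∃ α β : ℝ, 0 ≤ α ∧ 0 ≤ β ∧
              x = c + α • (p - c) + β • (p' - c)} := by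
  rintro ⟨p, hp, p', -, hli, hcone⟩
  -- for `q ∉ P` the inner supremum is the junk value `sSup ∅ = 0`, which distances dominate
  have hsup_iff : ∀ x : E, ∀ a, (⨆ q ∈ P, dist x q) < a ↔ ∀ q ∈ P, dist x q < a :=
    fun x a => hPfin.ciSup_lt_iff ⟨p, hp, Real.sSup_empty.trans_le dist_nonneg⟩
  set R := ⨆ q ∈ P, dist c q
  have hR : ∀ q ∈ P, dist c q ≤ R := fun q hq =>
    not_lt.1 fun h => lt_irrefl _ ((hsup_iff c _).1 h q hq)
  have hpc : 0 < dist c p := dist_pos.2 fun h => by simpa [h] using hli.ne_zero 0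
  obtain ⟨d, hd⟩ := hli.exists_inner_pos_of_mem_cone
  have hfar : ∀ q ∈ P, dist c q = R → 0 < ⟪q - c, d⟫ := by
    intro q hq hqR
    obtain ⟨α, β, hα, hβ, rfl⟩ := hcone hq
    rw [add_assoc, add_sub_cancel_left]
    refine hd α β hα hβ fun h0 => ?_
    rw [add_assoc, h0, add_zero, dist_self] at hqR
    linarith [hR p hp]
  obtain ⟨x, hx⟩ := exists_forall_dist_lt_of_inner_pos hPfin hR hfar
  exact (hc x).not_gt ((hsup_iff x R).2 hx)

theorem stmt2
    (P : Set E) (hPfin : P.Finite) (hPcard : 2 ≤ P.ncard)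
    (c : E) (hc : IsSECCenter P c) :
    ¬ ∃ p ∈ P, ∃ p' ∈ P,
        LinearIndependent ℝ ![p - c, p' - c] ∧
        P ⊆ {x : E | ∃ α β : ℝ, 0 ≤ α ∧ 0 ≤ β ∧
              x = c + α • (p - c) + β • (p' - c)} :=
  stmt2_general P hPfin c hc
end

section
/- Let P be a finite nonempty set of points in the Euclidean plane, let c be a center of the smallest enclosing circle of P and R its radius. Then every point of P lying on the smallest enclosing circle lies on the boundary of the convex hull of P: for every p ∈ P with dist c p = R, one has p ∈ frontier (convexHull ℝ P). -/
/-!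
Every point of `P` lies in the closed disc of radius `R` about `c`, hence so does the convex
hull. The interior of the hull therefore lies in the interior of the disc, the open disc, which
misses every point at distance exactly `R` from `c`.
-/

open Metric

theorem Set.Finite.le_biSup {ι α : Type*} [ConditionallyCompleteLattice α] {s : Set ι}
    (hs : s.Finite) (f : ι → α) {i : ι} (hi : i ∈ s) : f i ≤ ⨆ j ∈ s, f j := by
  have hbdd : BddAbove (⋃ j, Set.range fun _ : j ∈ s => f j) :=
    (hs.image f).bddAbove.mono <| by
      rintro _ ⟨_, ⟨j, rfl⟩, hj, rfl⟩
      exact ⟨j, hj, rfl⟩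
  exact le_ciSup₂ hbdd i hi

theorem mem_frontier_convexHull_of_subset_closedBall {F : Type*} [NormedAddCommGroup F]
    [NormedSpace ℝ F] [Nontrivial F] {s : Set F} {c p : F} {r : ℝ}
    (hs : s ⊆ closedBall c r) (hp : p ∈ s) (hpr : dist p c = r) :
    p ∈ frontier (convexHull ℝ s) := by
  refine ⟨subset_closure (subset_convexHull ℝ s hp), fun hint => ?_⟩
  have hhull : convexHull ℝ s ⊆ closedBall c r := convexHull_min hs (convex_closedBall c r)
  have hball : p ∈ ball c r := interior_closedBall' c r ▸ interior_mono hhull hint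
  exact (mem_ball.mp hball).ne hpr

theorem stmt4_general
    (P : Set E) (hPfin : P.Finite)
    (c : E)
    (R : ℝ) (hR : R = ⨆ p ∈ P, dist c p) :
    ∀ p ∈ P, dist c p = R → p ∈ frontier (convexHull ℝ P) := by
  intro p hp hpR
  have hsub : P ⊆ closedBall c R := fun q hq => by
    rw [mem_closedBall, dist_comm, hR]
    exact hPfin.le_biSup (dist c) hq
  exact mem_frontier_convexHull_of_subset_closedBall hsub hp (by rw [dist_comm, hpR])

theorem stmt4
    (P : Set E) (hPfin : P.Finite) (hPne : P.Nonempty)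
    (c : E) (hc : IsSECCenter P c)
    (R : ℝ) (hR : R = ⨆ p ∈ P, dist c p) :
    ∀ p ∈ P, dist c p = R → p ∈ frontier (convexHull ℝ P) :=
  stmt4_general P hPfin c R hR
end

section
/- Let P be a finite set of at least two points in the Euclidean plane and let c be a center of the smallest enclosing circle of P. Let Q be a finite nonempty set of points such that for every p ∈ P there exists q ∈ Q with q on the segment from c to p and q ≠ c (each position of P moves in a straight line toward c, and for each position at least one robot does not reach c). Then c is strictly inside the smallest enclosing circle of Q: if c' is a center of the smallest enclosing circle of Q and R' its radius, then dist c' c < R'. -/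
/-! If all of `P` lay strictly on one side `⟪v, · - c⟫ > 0` of a line through `c`, pushing `c`
a little along `v` would bring it strictly closer to every point of `P`, contradicting the
minimality of the enclosing radius. Taking `v = c' - c` gives `p ∈ P` with
`⟪c' - c, p - c⟫ ≤ 0`; the point `q ≠ c` of `Q` on `[c, p]` inherits this, so the angle at `c`
in the triangle `c' c q` is not acute and `dist c' c < dist c' q ≤ R'`. -/

open Metric

open Set RealInnerProductSpace

theorem Set.Finite.le_biSup_s5 {α β : Type*} [ConditionallyCompleteLattice β] {S : Set α}
    (hS : S.Finite) (f : α → β) {a : α} (ha : a ∈ S) : f a ≤ ⨆ p ∈ S, f p :=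
  le_ciSup₂ (f := fun p (_ : p ∈ S) => f p)
    ((hS.image f).bddAbove.mono <| iUnion_subset fun _ =>
      range_subset_iff.2 fun hp => mem_image_of_mem f hp) a ha

theorem Real.biSup_le {α : Type*} {S : Set α} {f : α → ℝ} {B : ℝ} (h : ∀ p ∈ S, f p ≤ B)
    (hB : 0 ≤ B) : ⨆ p ∈ S, f p ≤ B :=
  Real.iSup_le (fun p => Real.iSup_le (h p) hB) hB

section InnerProductSpace

variable {F : Type*} [NormedAddCommGroup F] [InnerProductSpace ℝ F]

theorem dist_add_smul_lt_dist {c p v : F} {t : ℝ} (ht : 0 < t)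
    (h : t * ‖v‖ ^ 2 < 2 * ⟪v, p - c⟫) : dist (c + t • v) p < dist c p := by
  refine lt_of_pow_lt_pow_left₀ 2 dist_nonneg ?_
  have hexp : dist (c + t • v) p ^ 2 = dist c p ^ 2 - t * (2 * ⟪v, p - c⟫ - t * ‖v‖ ^ 2) := by
    rw [dist_eq_norm, dist_eq_norm, show c + t • v - p = (c - p) + t • v by abel,
      norm_add_sq_real, inner_smul_right, norm_smul, Real.norm_of_nonneg ht.le,
      ← neg_sub p c, inner_neg_left, real_inner_comm]
    ring
  rw [hexp]
  nlinarith

theorem dist_lt_dist_of_inner_sub_nonpos {x c q : F} (h : ⟪x - c, q - c⟫ ≤ 0) (hq : q ≠ c) :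
    dist x c < dist x q := by
  refine lt_of_pow_lt_pow_left₀ 2 dist_nonneg ?_
  have hexp : dist x q ^ 2 = dist x c ^ 2 - 2 * ⟪x - c, q - c⟫ + dist q c ^ 2 := by
    rw [dist_eq_norm, dist_eq_norm, dist_eq_norm, show x - q = (x - c) - (q - c) by abel,
      norm_sub_sq_real]
  rw [hexp]
  nlinarith [dist_pos.2 hq]

theorem inner_sub_nonpos_of_mem_segment {v c p q : F} (hp : ⟪v, p - c⟫ ≤ 0)
    (hq : q ∈ segment ℝ c p) : ⟪v, q - c⟫ ≤ 0 := by
  rw [segment_eq_image'] at hq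
  obtain ⟨θ, ⟨hθ, -⟩, rfl⟩ := hq
  rw [add_sub_cancel_left, inner_smul_right]
  exact mul_nonpos_of_nonneg_of_nonpos hθ hp

theorem exists_inner_sub_nonpos_of_isMinOn {S : Set F} (hS : S.Finite) (hne : S.Nonempty)
    {c : F} (hc : IsMinOn (fun x => ⨆ p ∈ S, dist x p) univ c) (v : F) :
    ∃ p ∈ S, ⟪v, p - c⟫ ≤ 0 := by
  by_contra! hpos
  obtain ⟨p₀, hp₀, hmin⟩ := S.exists_min_image (fun p => ⟪v, p - c⟫) hS hne
  have hm : 0 < ⟪v, p₀ - c⟫ := hpos p₀ hp₀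
  have hv : 0 < ‖v‖ := norm_pos_iff.2 fun hv => by simp [hv] at hm
  set t := ⟪v, p₀ - c⟫ / ‖v‖ ^ 2
  have ht : 0 < t := by positivity
  have hcloser : ∀ p ∈ S, dist (c + t • v) p < dist c p := fun p hp =>
    dist_add_smul_lt_dist ht <| by
      rw [div_mul_cancel₀ _ (by positivity)]
      linarith [hmin p hp]
  obtain ⟨p₁, hp₁, hmax⟩ := S.exists_max_image (fun p => dist (c + t • v) p) hS hne
  refine lt_irrefl (⨆ p ∈ S, dist c p) ?_
  calc (⨆ p ∈ S, dist c p) ≤ ⨆ p ∈ S, dist (c + t • v) p := hc (mem_univ _)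
    _ ≤ dist (c + t • v) p₁ := Real.biSup_le hmax dist_nonneg
    _ < dist c p₁ := hcloser p₁ hp₁
    _ ≤ ⨆ p ∈ S, dist c p := hS.le_biSup_s5 _ hp₁

end InnerProductSpace

theorem stmt5_general
    (P : Set E) (hPfin : P.Finite) (hPcard : 2 ≤ P.ncard)
    (c : E) (hc : IsSECCenter P c)
    (Q : Set E) (hQfin : Q.Finite)
    (hmove : ∀ p ∈ P, ∃ q ∈ Q, q ∈ segment ℝ c p ∧ q ≠ c)
    (c' : E)
    (R' : ℝ) (hR' : R' = ⨆ q ∈ Q, dist c' q) :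
    dist c' c < R' := by
  obtain ⟨p, hp, hpc⟩ := exists_inner_sub_nonpos_of_isMinOn hPfin
    (nonempty_of_ncard_ne_zero (by omega)) (fun x _ => hc x) (c' - c)
  obtain ⟨q, hq, hqseg, hqc⟩ := hmove p hp
  calc dist c' c < dist c' q :=
        dist_lt_dist_of_inner_sub_nonpos (inner_sub_nonpos_of_mem_segment hpc hqseg) hqc
    _ ≤ R' := hR' ▸ hQfin.le_biSup_s5 _ hq

theorem stmt5
    (P : Set E) (hPfin : P.Finite) (hPcard : 2 ≤ P.ncard)
    (c : E) (hc : IsSECCenter P c)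
    (Q : Set E) (hQfin : Q.Finite) (hQne : Q.Nonempty)
    (hmove : ∀ p ∈ P, ∃ q ∈ Q, q ∈ segment ℝ c p ∧ q ≠ c)
    (c' : E) (hc' : IsSECCenter Q c')
    (R' : ℝ) (hR' : R' = ⨆ q ∈ Q, dist c' q) :
    dist c' c < R' :=
  stmt5_general P hPfin hPcard c hc Q hQfin hmove c' R' hR'
end

section
/- Let P be a finite set of at least two points in the Euclidean plane and let c be a center of the smallest enclosing circle of P. If c lies on the boundary of the convex hull of P, i.e. c ∈ frontier (convexHull ℝ P), then there exist two points x, y ∈ P with x ≠ y such that c lies strictly between x and y on the segment [x, y], i.e. c ∈ openSegment ℝ x y. -/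
/-!
Let `R` be the radius and `Q` the set of points of `P` at distance `R` from `c`. Then `c` lies in
the convex hull of `Q`: otherwise a direction separating `c` from `conv Q` moves `c` closer to every
point of `Q`, and a short enough step keeps it within `R` of the rest of `P`, contradicting
minimality. By Carathéodory, `c` is a combination with positive weights of affinely independent
points of `Q`, so of at most three points in the plane. Three would put `c` in the interior of a
triangle inside `conv P`, and one would make `c` a point at distance `R > 0` from itself; hence
there are two, and `c` lies strictly between them.
-/

open Metric

open Filter Topology Set
open scoped RealInnerProductSpace

theorem Set.Finite.le_ciSup₂ {α ι : Type*} [ConditionallyCompleteLattice α] {S : Set ι}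
    (hS : S.Finite) (f : ι → α) {q : ι} (hq : q ∈ S) : f q ≤ ⨆ p ∈ S, f p :=
  _root_.le_ciSup₂ (BddAbove.mono (t := f '' S)
    (iUnion_subset fun p => range_subset_iff.2 fun hp => ⟨p, hp, rfl⟩) (hS.image f).bddAbove) q hq

def farthestPoints {F : Type*} [PseudoMetricSpace F] (S : Set F) (c : F) : Set F :=
  {p ∈ S | dist c p = ⨆ q ∈ S, dist c q}

theorem farthestPoints_subset {F : Type*} [PseudoMetricSpace F] (S : Set F) (c : F) :
    farthestPoints S c ⊆ S :=
  sep_subset _ _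

section InnerProductSpace

variable {F : Type*} [NormedAddCommGroup F] [InnerProductSpace ℝ F]

theorem eventually_dist_add_smul_lt_dist {c p d : F} (hd : 0 < ⟪d, p - c⟫) :
    ∀ᶠ ε in 𝓝[>] (0 : ℝ), dist (c + ε • d) p < dist c p := by
  have hsmall : ∀ᶠ ε in 𝓝[>] (0 : ℝ), ε * ‖d‖ ^ 2 < 2 * ⟪d, p - c⟫ :=
    nhdsWithin_le_nhds <| ContinuousAt.eventually_lt (by fun_prop) (by fun_prop) (by simpa using hd)
  filter_upwards [hsmall, self_mem_nhdsWithin] with ε hε (hpos : 0 < ε)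
  have hsq : dist (c + ε • d) p ^ 2 = dist c p ^ 2 - ε * (2 * ⟪d, p - c⟫ - ε * ‖d‖ ^ 2) := by
    rw [dist_eq_norm, dist_comm, dist_eq_norm, show c + ε • d - p = ε • d - (p - c) by abel,
      norm_sub_sq_real, real_inner_smul_left, norm_smul, Real.norm_of_nonneg hpos.le]
    ring
  exact lt_of_pow_lt_pow_left₀ 2 dist_nonneg (by nlinarith)

theorem eventually_dist_add_smul_lt {c p : F} (d : F) {r : ℝ} (h : dist c p < r) :
    ∀ᶠ ε in 𝓝[>] (0 : ℝ), dist (c + ε • d) p < r :=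
  nhdsWithin_le_nhds <| ContinuousAt.eventually_lt (by fun_prop) continuousAt_const (by simpa using h)

theorem exists_mem_farthestPoints_inner_nonpos {S : Set F} (hS : S.Finite) (hne : S.Nonempty)
    {c : F} (hc : ∀ x, (⨆ p ∈ S, dist c p) ≤ ⨆ p ∈ S, dist x p) (d : F) :
    ∃ p ∈ farthestPoints S c, ⟪d, p - c⟫ ≤ 0 := by
  by_contra! h
  have hcloser : ∀ p ∈ S, ∀ᶠ ε in 𝓝[>] (0 : ℝ), dist (c + ε • d) p < ⨆ q ∈ S, dist c q := by
    intro p hp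
    rcases (hS.le_ciSup₂ (dist c) hp).lt_or_eq with hlt | heq
    · exact eventually_dist_add_smul_lt d hlt
    · exact heq ▸ eventually_dist_add_smul_lt_dist (h p ⟨hp, heq⟩)
  obtain ⟨ε, hε⟩ := ((eventually_all_finite hS).2 hcloser).exists
  exact (hc (c + ε • d)).not_gt ((hS.ciSup_lt_iff (f := dist (c + ε • d))
    (hne.imp fun p hp => ⟨hp, Real.sSup_empty.symm ▸ dist_nonneg⟩)).2 hε)

theorem mem_convexHull_farthestPoints [CompleteSpace F] {S : Set F} (hS : S.Finite)
    (hne : S.Nonempty) {c : F} (hc : ∀ x, (⨆ p ∈ S, dist c p) ≤ ⨆ p ∈ S, dist x p) :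
    c ∈ convexHull ℝ (farthestPoints S c) := by
  by_contra hQ
  obtain ⟨f, u, hfc, hfQ⟩ := geometric_hahn_banach_point_closed (convex_convexHull ℝ _)
    ((hS.subset (farthestPoints_subset S c)).isCompact_convexHull (𝕜 := ℝ)).isClosed hQ
  obtain ⟨p, hp, hle⟩ :=
    exists_mem_farthestPoints_inner_nonpos hS hne hc ((InnerProductSpace.toDual ℝ F).symm f)
  rw [InnerProductSpace.toDual_symm_apply, map_sub] at hle
  linarith [hfQ p (subset_convexHull ℝ _ hp)]

end InnerProductSpace

theorem exists_mem_openSegment_of_mem_convexHull {F : Type*} [NormedAddCommGroup F]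
    [NormedSpace ℝ F] [FiniteDimensional ℝ F] (hF : Module.finrank ℝ F = 2) {Q : Set F} {c : F}
    (hc : c ∈ convexHull ℝ Q) (hcQ : c ∉ Q) (hint : c ∉ interior (convexHull ℝ Q)) :
    ∃ x ∈ Q, ∃ y ∈ Q, x ≠ y ∧ c ∈ openSegment ℝ x y := by
  classical
  obtain ⟨ι, _, z, w, hzQ, hz, hw0, hw1, hwc⟩ := eq_pos_convex_span_of_mem_convexHull hc
  have hcard : Fintype.card ι ≤ 3 :=
    hz.card_le_finrank_succ.trans (by linarith [Submodule.finrank_le (vectorSpan ℝ (range z))])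
  obtain h | h | h | h : Fintype.card ι = 0 ∨ Fintype.card ι = 1 ∨ Fintype.card ι = 2 ∨
      Fintype.card ι = 3 := by omega
  · rw [Fintype.card_eq_zero_iff] at h
    simp at hw1
  · obtain ⟨_⟩ := Fintype.card_eq_one_iff_nonempty_unique.1 h
    simp only [Fintype.sum_unique] at hw1 hwc
    rw [hw1, one_smul] at hwc
    exact absurd (hzQ (mem_range_self _)) (hwc ▸ hcQ)
  · obtain ⟨i, j, hij, huniv⟩ := Finset.card_eq_two.1 h
    rw [huniv, Finset.sum_pair hij] at hw1 hwc
    exact ⟨z i, hzQ (mem_range_self i), z j, hzQ (mem_range_self j), hz.injective.ne hij,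
      w i, w j, hw0 i, hw0 j, hw1, hwc⟩
  · let b : AffineBasis ι ℝ F :=
      ⟨z, hz, hz.affineSpan_eq_top_iff_card_eq_finrank_add_one.2 (by omega)⟩
    refine (hint (interior_mono (convexHull_mono hzQ) ?_)).elim
    change c ∈ interior (convexHull ℝ (range b))
    rw [b.interior_convexHull]
    intro i
    rw [← hwc, ← Finset.univ.affineCombination_eq_linear_combination _ _ hw1]
    exact (b.coord_apply_combination_of_mem (Finset.mem_univ i) hw1).symm ▸ hw0 i

theorem stmt7
    (P : Set E) (hPfin : P.Finite) (hPcard : 2 ≤ P.ncard)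
    (c : E) (hc : IsSECCenter P c)
    (hfront : c ∈ frontier (convexHull ℝ P)) :
    ∃ x ∈ P, ∃ y ∈ P, x ≠ y ∧ c ∈ openSegment ℝ x y := by
  obtain ⟨p₁, hp₁, p₂, hp₂, hp₁₂⟩ := (Set.one_lt_ncard hPfin).1 hPcard
  have hcQ : c ∉ farthestPoints P c := by
    rintro ⟨-, hR⟩
    have h₁ := hPfin.le_ciSup₂ (dist c) hp₁
    have h₂ := hPfin.le_ciSup₂ (dist c) hp₂
    rw [← hR, dist_self, dist_le_zero] at h₁ h₂
    exact hp₁₂ (h₁ ▸ h₂)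
  obtain ⟨x, hx, y, hy, hxy, hcxy⟩ := exists_mem_openSegment_of_mem_convexHull
    finrank_euclideanSpace_fin (mem_convexHull_farthestPoints hPfin ⟨p₁, hp₁⟩ hc) hcQ
    fun hint => hfront.2 (interior_mono (convexHull_mono (farthestPoints_subset P c)) hint)
  exact ⟨x, farthestPoints_subset P c hx, y, farthestPoints_subset P c hy, hxy, hcxy⟩
end

section
/- Let P be a finite set of points in the Euclidean plane and let c be a point lying in the interior of the convex hull of P, i.e. c ∈ interior (convexHull ℝ P). Let s : E → ℝ be a function with s p > 0 for every p ∈ P, and let Q = { c + s p • (p − c) : p ∈ P } be the set obtained by moving each point of P along the straight line through c toward or away from c without reaching c. Then c remains in the interior of the convex hull of Q: c ∈ interior (convexHull ℝ Q). -/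
/-!
Let `m > 0` be the least of the factors `s p`. Each point `c + m • (p - c)` lies on the segment
from `c` to the moved point `c + s p • (p - c)`, and `c` itself is a convex combination of the
moved points (rescale the barycentric weights of `c` by `1 / s p`). Hence the homothety of ratio
`m` about `c` maps the hull of `P` into the hull of `Q`; being an open map fixing `c`, it carries
an interior neighbourhood of `c` to one inside the hull of `Q`.
-/

open Metric

section

variable {𝕜 V : Type*} [Field 𝕜] [LinearOrder 𝕜] [IsStrictOrderedRing 𝕜] [AddCommGroup V]
  [Module 𝕜 V] {P : Set V} {c : V} {s : V → 𝕜}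

open Finset in
theorem center_mem_convexHull_image_add_smul_sub (hc : c ∈ convexHull 𝕜 P)
    (hs : ∀ p ∈ P, 0 < s p) : c ∈ convexHull 𝕜 ((fun p => c + s p • (p - c)) '' P) := by
  obtain ⟨ι, _, w, z, hw₀, hw₁, hzP, hwz⟩ := mem_convexHull_iff_exists_fintype.1 hc
  set w' : ι → 𝕜 := fun i => w i / s (z i)
  have hw'₀ : ∀ i ∈ univ, 0 ≤ w' i := fun i _ => div_nonneg (hw₀ i) (hs _ (hzP i)).le
  have hw'pos : 0 < ∑ i, w' i := by
    obtain ⟨i, -, hi⟩ := exists_lt_of_sum_lt (f := fun _ => (0 : 𝕜)) (g := w) (s := univ)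
      (by simp [hw₁])
    exact sum_pos' hw'₀ ⟨i, mem_univ i, div_pos hi (hs _ (hzP i))⟩
  have hsum : ∑ i, w' i • (c + s (z i) • (z i - c)) = (∑ i, w' i) • c := by
    have hcancel : ∀ i, w' i • s (z i) • (z i - c) = w i • (z i - c) := fun i => by
      rw [smul_smul, div_mul_cancel₀ _ (hs _ (hzP i)).ne']
    simp only [smul_add, hcancel]
    rw [sum_add_distrib, ← sum_smul]
    simp only [smul_sub, sum_sub_distrib, ← sum_smul, hwz, hw₁, one_smul, sub_self, add_zero]
  have hmass := centerMass_mem_convexHull univ hw'₀ hw'pos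
    (z := fun i => c + s (z i) • (z i - c)) (s := (fun p => c + s p • (p - c)) '' P)
    fun i _ => ⟨z i, hzP i, rfl⟩
  rwa [centerMass, hsum, smul_smul, inv_mul_cancel₀ hw'pos.ne', one_smul] at hmass

theorem homothety_image_convexHull_subset_convexHull_image (hc : c ∈ convexHull 𝕜 P)
    (hs : ∀ p ∈ P, 0 < s p) {m : 𝕜} (hm : 0 ≤ m) (hms : ∀ p ∈ P, m ≤ s p) :
    AffineMap.homothety c m '' convexHull 𝕜 P ⊆
      convexHull 𝕜 ((fun p => c + s p • (p - c)) '' P) := by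
  rw [AffineMap.image_convexHull]
  refine convexHull_min ?_ (convex_convexHull 𝕜 _)
  rintro _ ⟨p, hp, rfl⟩
  have hstar := (convex_convexHull 𝕜 _).starConvex
    (center_mem_convexHull_image_add_smul_sub hc hs)
  have hsp := hs p hp
  have hseg := hstar.add_smul_sub_mem (subset_convexHull 𝕜 _ ⟨p, hp, rfl⟩)
    (div_nonneg hm hsp.le) ((div_le_one hsp).2 (hms p hp))
  rwa [add_sub_cancel_left, smul_smul, div_mul_cancel₀ _ hsp.ne', add_comm] at hseg

end

theorem stmt8
    (P : Set E) (hPfin : P.Finite)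
    (c : E) (hc : c ∈ interior (convexHull ℝ P))
    (s : E → ℝ) (hs : ∀ p ∈ P, 0 < s p)
    (Q : Set E) (hQ : Q = (fun p => c + s p • (p - c)) '' P) :
    c ∈ interior (convexHull ℝ Q) := by
  subst hQ
  have hcP : c ∈ convexHull ℝ P := interior_subset hc
  obtain ⟨p₀, hp₀, hmin⟩ := P.exists_min_image s hPfin (convexHull_nonempty_iff.1 ⟨c, hcP⟩)
  have hm := hs p₀ hp₀
  refine interior_mono (homothety_image_convexHull_subset_convexHull_image hcP hs hm.le hmin) ?_
  exact (AffineMap.homothety_isOpenMap c _ hm.ne').image_interior_subset _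
    ⟨c, hc, AffineMap.homothety_apply_same c _⟩
end

section
/- Let P be a finite set of at least two points in the Euclidean plane, let c be the center of its smallest enclosing circle and R its radius. Then either the circle passes through two points of P that are opposite on the same diameter — i.e. there exist p, p' ∈ P with dist c p = R, dist c p' = R and c = midpoint ℝ p p' — or it passes through at least three of the points of P — i.e. the set { p ∈ P : dist c p = R } has at least three elements. -/
/-!
If the farthest points of `P` from `c` are at most two and not antipodal, they lie in an open
half-plane through `c`: the midpoint `m` of two of them (or the single one) satisfies
`⟪m - c, q - c⟫ > 0` for every farthest point `q`. Moving `c` a little towards `m` then strictly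
decreases the distance to every farthest point, while the other points stay at distance `< R`,
so the maximal distance drops below `R`, contradicting the minimality of `c`.
-/

open Metric

open Filter Topology RealInnerProductSpace

section InnerProductSpace

variable {F : Type*} [NormedAddCommGroup F] [InnerProductSpace ℝ F]

lemma dist_add_smul_sq (c v q : F) (t : ℝ) :
    dist (c + t • v) q ^ 2 = dist c q ^ 2 - 2 * t * ⟪v, q - c⟫ + t ^ 2 * ‖v‖ ^ 2 := by
  rw [dist_eq_norm, dist_eq_norm, show c + t • v - q = (c - q) + t • v by abel,
    norm_add_sq_real, real_inner_smul_right, norm_smul, Real.norm_eq_abs, mul_pow, sq_abs,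
    ← neg_sub q c, inner_neg_left, real_inner_comm]
  ring

lemma eventually_dist_add_smul_lt_s10 {c v q : F} (hv : 0 < ⟪v, q - c⟫) :
    ∀ᶠ t in 𝓝[>] (0 : ℝ), dist (c + t • v) q < dist c q := by
  have hsmall : ∀ᶠ t in 𝓝 (0 : ℝ), t * ‖v‖ ^ 2 < 2 * ⟪v, q - c⟫ :=
    ((continuous_id.mul continuous_const).tendsto' 0 0 (zero_mul _)).eventually_lt_const
      (by positivity)
  filter_upwards [nhdsWithin_le_nhds hsmall, self_mem_nhdsWithin] with t ht (ht0 : 0 < t)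
  refine lt_of_pow_lt_pow_left₀ 2 dist_nonneg ?_
  rw [dist_add_smul_sq]
  nlinarith

lemma exists_forall_dist_lt {S : Set F} (hS : S.Finite) {c v : F} {R : ℝ}
    (hle : ∀ q ∈ S, dist c q ≤ R) (hpos : ∀ q ∈ S, dist c q = R → 0 < ⟪v, q - c⟫) :
    ∃ x, ∀ q ∈ S, dist x q < R := by
  have hmove : ∀ᶠ t in 𝓝[>] (0 : ℝ), ∀ q ∈ S, dist (c + t • v) q < R := by
    refine hS.eventually_all.2 fun q hq => ?_
    rcases (hle q hq).lt_or_eq with hlt | heq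
    · have hcont : Continuous fun t : ℝ => dist (c + t • v) q := by fun_prop
      exact nhdsWithin_le_nhds <|
        (hcont.tendsto' 0 _ (by simp)).eventually_lt_const hlt
    · exact heq ▸ eventually_dist_add_smul_lt_s10 (hpos q hq heq)
  obtain ⟨t, ht⟩ := hmove.exists
  exact ⟨_, ht⟩

lemma inner_midpoint_sub_eq_norm_sq {a b c : F} (h : dist a c = dist b c) :
    ⟪midpoint ℝ a b - c, a - c⟫ = ‖midpoint ℝ a b - c‖ ^ 2 := by
  rw [dist_eq_norm, dist_eq_norm] at h
  have hm : midpoint ℝ a b - c = (2⁻¹ : ℝ) • ((a - c) + (b - c)) := by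
    rw [midpoint_eq_smul_add, invOf_eq_inv]; module
  rw [hm, norm_smul, mul_pow, norm_add_sq_real, real_inner_smul_left, inner_add_left,
    real_inner_self_eq_norm_sq, real_inner_comm, ← h, Real.norm_of_nonneg (by norm_num)]
  ring

lemma inner_midpoint_sub_pos {a b c : F} (h : dist a c = dist b c) (hne : midpoint ℝ a b ≠ c) :
    0 < ⟪midpoint ℝ a b - c, a - c⟫ := by
  rw [inner_midpoint_sub_eq_norm_sq h]
  exact pow_pos (norm_pos_iff.2 (sub_ne_zero.2 hne)) 2

end InnerProductSpace

lemma Set.exists_subset_pair_of_ncard_lt_three {α : Type*} {s : Set α} (hs : s.Finite)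
    (hne : s.Nonempty) (h3 : s.ncard < 3) : ∃ a ∈ s, ∃ b ∈ s, s ⊆ {a, b} := by
  have hpos := (Set.ncard_pos hs).2 hne
  obtain h1 | h2 : s.ncard = 1 ∨ s.ncard = 2 := by omega
  · obtain ⟨a, rfl⟩ := Set.ncard_eq_one.1 h1
    exact ⟨a, rfl, a, rfl, by simp⟩
  · obtain ⟨a, b, -, rfl⟩ := Set.ncard_eq_two.1 h2
    exact ⟨a, by simp, b, by simp, le_rfl⟩

theorem stmt10
    (P : Set E) (hPfin : P.Finite) (hPcard : 2 ≤ P.ncard)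
    (c : E) (hc : IsSECCenter P c)
    (R : ℝ) (hR : R = ⨆ p ∈ P, dist c p) :
    (∃ p ∈ P, ∃ p' ∈ P, dist c p = R ∧ dist c p' = R ∧ c = midpoint ℝ p p') ∨
      3 ≤ {p ∈ P | dist c p = R}.ncard := by
  obtain ⟨p₀, hp₀⟩ : P.Nonempty := (Set.ncard_pos hPfin).1 (by omega)
  -- off `P` the supremum `⨆ p ∈ P` sees the junk value `sSup ∅ = 0`, harmless since distances are `≥ 0`
  have hbot : ∀ x : E, ∃ p ∈ P, sSup ∅ ≤ dist x p :=
    fun x => ⟨p₀, hp₀, Real.sSup_empty.trans_le dist_nonneg⟩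
  have hle : ∀ q ∈ P, dist c q ≤ R := fun q hq =>
    not_lt.1 fun h => (((hPfin.ciSup_lt_iff (hbot c)).1 (hR ▸ h)) q hq).false
  obtain ⟨a₀, ha₀, ha₀R⟩ : R ∈ dist c '' P := hR ▸ hPfin.ciSup_mem_image _ (hbot c)
  by_contra! hcon
  obtain ⟨hno_antipodal, hfew⟩ := hcon
  set K := {p ∈ P | dist c p = R}
  obtain ⟨a, ha, b, hb, hK⟩ := Set.exists_subset_pair_of_ncard_lt_three
    (hPfin.subset fun _ hp => hp.1) (⟨a₀, ha₀, ha₀R⟩ : K.Nonempty) hfew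
  have hmid : midpoint ℝ a b ≠ c := (hno_antipodal a ha.1 b hb.1 ha.2 hb.2).symm
  have hab : dist a c = dist b c := by rw [dist_comm, ha.2, dist_comm, hb.2]
  obtain ⟨x, hx⟩ := exists_forall_dist_lt hPfin (v := midpoint ℝ a b - c) hle fun q hq hqR => by
    rcases hK ⟨hq, hqR⟩ with rfl | rfl
    · exact inner_midpoint_sub_pos hab hmid
    · rw [midpoint_comm] at hmid ⊢
      exact inner_midpoint_sub_pos hab.symm hmid
  exact (hR ▸ hc x).not_gt ((hPfin.ciSup_lt_iff (hbot x)).2 hx)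
end
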